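/- arXiv:1610.00117 — 3 statements merged into one kernel-verified Lean document; each statement's English description precedes it below -/
import Mathlib

section
/- Every graph on n ≥ 3 vertices with minimum degree at least n/2 contains a Hamilton cycle. -/
namespace SimpleGraph.Walk
variable {V : Type*} {G : SimpleGraph V}

lemma IsPath.getVert_injOn' {u v : V} {p : G.Walk u v} (hp : p.IsPath) :
    ∀ i ≤ p.length, ∀ j ≤ p.length, p.getVert i = p.getVert j → i = j := by
  induction p with
  | nil => intro i hi j hj _; simp at hi hj; omega
  | cons h q ih =>
    rw [cons_isPath_iff] at hp
    intro i hi j hj hij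
    match i, j with
    | 0, 0 => rfl
    | 0, j + 1 =>
      exfalso
      rw [getVert_zero, getVert_cons_succ] at hij
      exact hp.2 (mem_support_iff_exists_getVert.mpr ⟨j, hij.symm, by simpa using hj⟩)
    | i + 1, 0 =>
      exfalso
      rw [getVert_zero, getVert_cons_succ] at hij
      exact hp.2 (mem_support_iff_exists_getVert.mpr ⟨i, hij, by simpa using hi⟩)
    | i + 1, j + 1 =>
      rw [getVert_cons_succ, getVert_cons_succ] at hij
      have := ih hp.1 i (by simpa using hi) j (by simpa using hj) hij
      omega

end SimpleGraph.Walk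

open SimpleGraph Walk Finset in
/-- **Dirac's theorem**: every graph on `n ≥ 3` vertices with minimum degree
at least `n/2` contains a Hamilton cycle. -/
theorem dirac_theorem {V : Type*} [Fintype V] [DecidableEq V]
    (G : SimpleGraph V) [DecidableRel G.Adj]
    (hn : 3 ≤ Fintype.card V)
    (hdeg : Fintype.card V ≤ 2 * G.minDegree) :
    G.IsHamiltonian := by
  classical
  set n := Fintype.card V with hndef
  -- minimum degree at least 2
  have hmd2 : 2 ≤ G.minDegree := by omega
  -- Step A: G is connected (any two vertices are joined by a walk)
  have hcommon : ∀ u w : V, u ≠ w → ¬ G.Adj u w → ∃ z, G.Adj u z ∧ G.Adj w z := by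
    intro u w huw hna
    by_contra hc
    push_neg at hc
    have h1 : G.neighborFinset u ⊆ Finset.univ \ {u, w} := by
      intro z hz
      rw [mem_neighborFinset] at hz
      simp only [Finset.mem_sdiff, Finset.mem_univ, true_and, Finset.mem_insert,
        Finset.mem_singleton]
      push_neg
      exact ⟨fun h => G.loopless.irrefl u (h ▸ hz), fun h => hna (h ▸ hz)⟩
    have h2 : G.neighborFinset w ⊆ Finset.univ \ {u, w} := by
      intro z hz
      rw [mem_neighborFinset] at hz
      simp only [Finset.mem_sdiff, Finset.mem_univ, true_and, Finset.mem_insert,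
        Finset.mem_singleton]
      push_neg
      refine ⟨fun h => hna (h ▸ hz).symm, fun h => G.loopless.irrefl w (h ▸ hz)⟩
    have hd : Disjoint (G.neighborFinset u) (G.neighborFinset w) := by
      rw [Finset.disjoint_left]
      intro z hz1 hz2
      rw [mem_neighborFinset] at hz1 hz2
      exact hc z hz1 hz2
    have hcard := Finset.card_le_card (Finset.union_subset h1 h2)
    rw [Finset.card_union_of_disjoint hd] at hcard
    have hc2 : ({u, w} : Finset V).card = 2 := by
      rw [Finset.card_insert_of_notMem (by simpa using huw), Finset.card_singleton]
    rw [Finset.card_sdiff_of_subset (Finset.subset_univ _), Finset.card_univ, hc2] at hcard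
    have hu : G.minDegree ≤ (G.neighborFinset u).card := by
      rw [card_neighborFinset_eq_degree]; exact G.minDegree_le_degree u
    have hw : G.minDegree ≤ (G.neighborFinset w).card := by
      rw [card_neighborFinset_eq_degree]; exact G.minDegree_le_degree w
    omega
  have hreach : ∀ u w : V, G.Reachable u w := by
    intro u w
    by_cases h : u = w
    · exact h ▸ Reachable.refl u
    by_cases hadj : G.Adj u w
    · exact hadj.reachable
    obtain ⟨z, hz1, hz2⟩ := hcommon u w h hadj
    exact hz1.reachable.trans hz2.reachable.symm
  -- Step B: maximal path
  set P : ℕ → Prop := fun l => ∃ (a b : V) (q : G.Walk a b), q.IsPath ∧ q.length = l with hPdef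
  have hP2 : P 2 := by
    have : Nonempty V := Fintype.card_pos_iff.mp (by omega)
    obtain ⟨v⟩ := this
    have hdv : 2 ≤ (G.neighborFinset v).card := by
      rw [card_neighborFinset_eq_degree]
      exact le_trans hmd2 (G.minDegree_le_degree v)
    obtain ⟨x, hx, y, hy, hxy⟩ := Finset.one_lt_card.mp (show 1 < (G.neighborFinset v).card by omega)
    rw [mem_neighborFinset] at hx hy
    refine ⟨x, y, Walk.cons hx.symm (Walk.cons hy Walk.nil), ?_, rfl⟩
    apply Walk.IsPath.mk'
    simp only [Walk.support_cons, Walk.support_nil]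
    simp [List.nodup_cons, hxy, hx.ne', hy.ne, (G.ne_of_adj hx)]
  set L : ℕ := Nat.findGreatest P n with hLdef
  have hbound : ∀ {c d : V} (q : G.Walk c d), q.IsPath → q.length ≤ n :=
    fun q hq => le_of_lt hq.length_lt
  have hmax : ∀ {c d : V} (q : G.Walk c d), q.IsPath → q.length ≤ L := by
    intro c d q hq
    exact Nat.le_findGreatest (hbound q hq) ⟨c, d, q, hq, rfl⟩
  have hPL : P L := Nat.findGreatest_spec (m := 2) (by omega) hP2
  have hL2 : 2 ≤ L := Nat.le_findGreatest (by omega) hP2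
  obtain ⟨a, b, p, hp, hpl⟩ := hPL
  set k := p.length with hkdef
  have hk2 : 2 ≤ k := hpl ▸ hL2
  have hkn : k < n := hp.length_lt
  -- neighbors of endpoints lie on the path
  have hnb_a : ∀ z, G.Adj a z → z ∈ p.support := by
    intro z hz
    by_contra hzs
    have hlonger : (p.cons hz.symm).IsPath := hp.cons hzs
    have := hmax _ hlonger
    rw [Walk.length_cons] at this
    omega
  have hnb_b : ∀ z, G.Adj b z → z ∈ p.support := by
    intro z hz
    by_contra hzs
    have hzs' : z ∉ p.reverse.support := by rwa [Walk.support_reverse, List.mem_reverse]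
    have hlonger : (p.reverse.cons hz.symm).IsPath := hp.reverse.cons hzs'
    have := hmax _ hlonger
    rw [Walk.length_cons, Walk.length_reverse] at this
    omega
  -- index function
  set f : V → ℕ := fun z =>
    if h : z ∈ p.support then Classical.choose (Walk.mem_support_iff_exists_getVert.mp h)
    else 0 with hfdef
  have hfspec : ∀ z (h : z ∈ p.support), p.getVert (f z) = z ∧ f z ≤ k := by
    intro z h
    simp only [hfdef, dif_pos h]
    exact Classical.choose_spec (Walk.mem_support_iff_exists_getVert.mp h)
  -- Step D: pigeonhole
  set A : Finset ℕ := (Finset.range k).filter (fun i => G.Adj a (p.getVert (i + 1))) with hAdef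
  set B : Finset ℕ := (Finset.range k).filter (fun i => G.Adj b (p.getVert i)) with hBdef
  have hAcard : G.degree a ≤ A.card := by
    rw [← card_neighborFinset_eq_degree]
    apply Finset.card_le_card_of_injOn (fun z => f z - 1)
    · intro z hz
      rw [Finset.mem_coe, mem_neighborFinset] at hz
      have hzs := hnb_a z hz
      obtain ⟨hgv, hle⟩ := hfspec z hzs
      have hf0 : f z ≠ 0 := by
        intro h0
        rw [h0, Walk.getVert_zero] at hgv
        exact hz.ne' hgv.symm
      rw [hAdef, Finset.mem_coe, Finset.mem_filter, Finset.mem_range]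
      constructor
      · show f z - 1 < k; omega
      · have : f z - 1 + 1 = f z := by omega
        rw [this, hgv]; exact hz
    · intro z1 hz1 z2 hz2 he
      simp only [Finset.coe_sort_coe, mem_coe, mem_neighborFinset] at hz1 hz2
      obtain ⟨hgv1, hle1⟩ := hfspec z1 (hnb_a z1 hz1)
      obtain ⟨hgv2, hle2⟩ := hfspec z2 (hnb_a z2 hz2)
      have hf01 : f z1 ≠ 0 := fun h0 => hz1.ne' (by rw [h0, Walk.getVert_zero] at hgv1; exact hgv1.symm)
      have hf02 : f z2 ≠ 0 := fun h0 => hz2.ne' (by rw [h0, Walk.getVert_zero] at hgv2; exact hgv2.symm)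
      simp only at he
      have : f z1 = f z2 := by omega
      rw [← hgv1, ← hgv2, this]
  have hBcard : G.degree b ≤ B.card := by
    rw [← card_neighborFinset_eq_degree]
    apply Finset.card_le_card_of_injOn f
    · intro z hz
      rw [Finset.mem_coe, mem_neighborFinset] at hz
      have hzs := hnb_b z hz
      obtain ⟨hgv, hle⟩ := hfspec z hzs
      have hfk : f z ≠ k := by
        intro h0
        rw [h0, Walk.getVert_length] at hgv
        exact hz.ne' hgv.symm
      rw [hBdef, Finset.mem_coe, Finset.mem_filter, Finset.mem_range]
      exact ⟨by omega, by rw [hgv]; exact hz⟩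
    · intro z1 hz1 z2 hz2 he
      simp only [Finset.coe_sort_coe, mem_coe, mem_neighborFinset] at hz1 hz2
      obtain ⟨hgv1, _⟩ := hfspec z1 (hnb_b z1 hz1)
      obtain ⟨hgv2, _⟩ := hfspec z2 (hnb_b z2 hz2)
      rw [← hgv1, ← hgv2, he]
  have hsub : A ∪ B ⊆ Finset.range k := by
    rw [hAdef, hBdef]
    exact Finset.union_subset (Finset.filter_subset _ _) (Finset.filter_subset _ _)
  have hunion : (A ∪ B).card ≤ k := by
    simpa using Finset.card_le_card hsub
  have hinter : 0 < (A ∩ B).card := by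
    have h1 := Finset.card_union_add_card_inter A B
    have hda : G.minDegree ≤ G.degree a := G.minDegree_le_degree a
    have hdb : G.minDegree ≤ G.degree b := G.minDegree_le_degree b
    omega
  obtain ⟨i, hi⟩ := Finset.card_pos.mp hinter
  rw [Finset.mem_inter, hAdef, hBdef, Finset.mem_filter, Finset.mem_filter,
    Finset.mem_range] at hi
  obtain ⟨⟨hik, hay⟩, _, hbx⟩ := hi
  -- Step E: the cycle
  set x := p.getVert i with hxdef
  have hxs : x ∈ p.support := Walk.mem_support_iff_exists_getVert.mpr ⟨i, rfl, by omega⟩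
  set p1 := p.takeUntil x hxs with hp1def
  set p2 := p.dropUntil x hxs with hp2def
  have hspec : p1.append p2 = p := p.take_spec hxs
  have hlen12 : p1.length + p2.length = k := by
    rw [hkdef, ← hspec, Walk.length_append]
  have hp1len : p1.length = i := by
    have h1 : p.getVert p1.length = x := by
      conv_lhs => rw [← hspec]
      rw [Walk.getVert_append]
      simp
    exact hp.getVert_injOn' p1.length (by omega) i (by omega) (h1.trans rfl)
  have hp2nil : ¬ p2.Nil := by
    rw [Walk.nil_iff_length_eq]
    omega
  have hp2gv1 : p2.getVert 1 = p.getVert (i + 1) := by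
    conv_rhs => rw [← hspec]
    rw [Walk.getVert_append, hp1len]
    simp
  set y := p2.getVert 1 with hydef
  have hay' : G.Adj a y := hp2gv1 ▸ hay
  set p3 := p2.tail with hp3def
  have hcons : Walk.cons (p2.adj_snd hp2nil) p3 = p2 := p2.cons_tail_eq hp2nil
  have hsupp : p.support = p1.support ++ p3.support := by
    conv_lhs => rw [← hspec]
    rw [Walk.support_append, Walk.support_tail_of_not_nil p2 hp2nil]
  have hnodup : (p1.support ++ p3.support).Nodup := hsupp ▸ hp.support_nodup
  set q : G.Walk y a := p3.append (Walk.cons hbx p1.reverse) with hqdef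
  have hqsupp : q.support = p3.support ++ p1.support.reverse := by
    rw [hqdef, Walk.support_append, Walk.support_cons, List.tail_cons, Walk.support_reverse]
  have hqpath : q.IsPath := by
    apply Walk.IsPath.mk'
    rw [hqsupp]
    rw [List.nodup_append] at hnodup ⊢
    obtain ⟨h1, h3, hdisj⟩ := hnodup
    exact ⟨h3, List.nodup_reverse.mpr h1, fun z hz3 w hw1 hzw => hdisj w (List.mem_reverse.mp hw1) z hz3 hzw.symm⟩
  have hdisj13 : ∀ z, z ∈ p1.support → z ∈ p3.support → False := by
    rw [List.nodup_append] at hnodup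
    exact fun z h1 h3 => hnodup.2.2 z h1 z h3 rfl
  have hedge_not : s(a, y) ∉ q.edges := by
    rw [hqdef, Walk.edges_append, Walk.edges_cons]
    intro hmem
    rcases List.mem_append.mp hmem with h3 | hrest
    · exact hdisj13 a p1.start_mem_support (p3.fst_mem_support_of_mem_edges h3)
    rcases List.mem_cons.mp hrest with heq | h1
    · rw [Sym2.eq_iff] at heq
      rcases heq with ⟨hab, _⟩ | ⟨hax, hyb⟩
      · have := hp.getVert_injOn' 0 (by omega) k le_rfl
          (by rw [Walk.getVert_zero, Walk.getVert_length, hab])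
        omega
      · have hia : i = 0 := by
          have := hp.getVert_injOn' i (by omega) 0 (by omega)
            (by rw [Walk.getVert_zero, ← hxdef, ← hax])
          omega
        have hik' : i + 1 = k := by
          apply hp.getVert_injOn' (i + 1) (by omega) k le_rfl
          rw [Walk.getVert_length, ← hp2gv1, hyb]
        omega
    · rw [Walk.edges_reverse, List.mem_reverse] at h1
      have : y ∈ p1.support := p1.snd_mem_support_of_mem_edges h1
      exact hdisj13 y this p3.start_mem_support
  set c : G.Walk a a := Walk.cons hay' q with hcdef
  have hcyc : c.IsCycle := (Walk.cons_isCycle_iff q hay').mpr ⟨hqpath, hedge_not⟩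
  have hcsupp : ∀ z, z ∈ c.support ↔ z ∈ p.support := by
    intro z
    rw [hcdef, Walk.support_cons, hsupp]
    simp only [List.mem_cons, List.mem_append, hqsupp, List.mem_reverse]
    constructor
    · rintro (rfl | h3 | h1)
      · exact Or.inl p1.start_mem_support
      · exact Or.inr h3
      · exact Or.inl h1
    · rintro (h1 | h3)
      · exact Or.inr (Or.inr h1)
      · exact Or.inr (Or.inl h3)
  have hclen : c.length = k + 1 := by
    rw [hcdef, Walk.length_cons, hqdef, Walk.length_append, Walk.length_cons,
      Walk.length_reverse]
    have h3len : p3.length + 1 = p2.length := p2.length_tail_add_one hp2nil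
    omega
  -- Step F: the cycle is spanning
  have hall : ∀ w, w ∈ c.support := by
    by_contra hc
    push_neg at hc
    obtain ⟨w, hw⟩ := hc
    obtain ⟨wk⟩ := hreach a w
    obtain ⟨d, _, hdf, hds⟩ := wk.exists_boundary_dart {z | z ∈ c.support}
      (c.start_mem_support) hw
    have hdfc : d.fst ∈ c.support := hdf
    set c' := c.rotate d.fst hdfc with hc'def
    have hc'cyc : c'.IsCycle := hcyc.rotate hdfc
    have hc'nil : ¬ c'.Nil := hc'cyc.not_nil
    set r := c'.tail with hrdef
    have hrsupp : r.support = c'.support.tail := c'.support_tail_of_not_nil hc'nil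
    have hrsub : ∀ z, z ∈ r.support → z ∈ c.support := by
      intro z hz
      rw [hrsupp] at hz
      have hrot := c.support_rotate _ hdfc
      have := (List.IsRotated.mem_iff hrot).mp hz
      exact List.mem_of_mem_tail this
    have hrpath : r.IsPath := by
      apply Walk.IsPath.mk'
      rw [hrsupp]
      exact hc'cyc.2
    set r2 := r.append (Walk.cons d.adj Walk.nil) with hr2def
    have hr2path : r2.IsPath := by
      apply Walk.IsPath.mk'
      rw [hr2def, Walk.support_append, Walk.support_cons, Walk.support_nil, List.tail_cons]
      rw [List.nodup_append]
      refine ⟨hrpath.support_nodup, List.nodup_singleton _, ?_⟩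
      intro z hz z' hz' hzz
      rw [List.mem_singleton] at hz'
      subst hz'
      exact hds (hrsub _ (hzz ▸ hz))
    have hr2len : r2.length = k + 1 := by
      rw [hr2def, Walk.length_append, Walk.length_cons, Walk.length_nil]
      have h1 : r.length + 1 = c'.length := c'.length_tail_add_one hc'nil
      have h2 : c'.length = c.length := by
        have hd := c.rotate_darts _ hdfc
        have := hd.perm.length_eq
        rwa [Walk.length_darts, Walk.length_darts] at this
      omega
    have := hmax r2 hr2path
    rw [hr2len, hpl] at this
    omega
  -- Conclusion
  intro _
  refine ⟨a, c, ?_⟩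
  rw [Walk.isHamiltonianCycle_isCycle_and_isHamiltonian_tail]
  refine ⟨hcyc, ?_⟩
  have htail : c.tail = q.copy (q.getVert_zero).symm rfl := Walk.tail_cons hay' q
  rw [htail]
  apply Walk.IsPath.isHamiltonian_of_mem
  · exact (Walk.isPath_copy q _ _).mpr hqpath
  · intro w
    have key : ∀ {u' : V} (h : y = u'), w ∈ q.support → w ∈ (q.copy h rfl).support := by
      intro u' h hw; subst h; exact hw
    apply key
    have hw := hall w
    rw [hcdef, Walk.support_cons, List.mem_cons] at hw
    rcases hw with rfl | hw
    · exact q.end_mem_support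
    · exact hw
end

section
/- If A is an n × n matrix with entries in {0,1} such that every row and every column contains exactly r ones (r ≥ 1), then per(A) ≤ (r!)^{n/r}. -/
open Finset Real

section
variable {ι κ : Type*} [Fintype ι] [DecidableEq ι] [Fintype κ] [DecidableEq κ]

def mset (d : κ) (s : Finset ι) (S : ι → Finset κ) : Finset (ι → κ) :=
  Finset.univ.filter (fun f =>
    (∀ i ∈ s, ∀ j ∈ s, f i = f j → i = j) ∧ (∀ i ∈ s, f i ∈ S i) ∧ ∀ i, i ∉ s → f i = d)

lemma mem_mset {d : κ} {s : Finset ι} {S : ι → Finset κ} {f : ι → κ} :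
    f ∈ mset d s S ↔
      (∀ i ∈ s, ∀ j ∈ s, f i = f j → i = j) ∧ (∀ i ∈ s, f i ∈ S i) ∧ ∀ i, i ∉ s → f i = d := by
  simp [mset]

lemma mset_empty (d : κ) (S : ι → Finset κ) : (mset d ∅ S).card = 1 := by
  rw [Finset.card_eq_one]
  refine ⟨fun _ => d, ?_⟩
  ext f
  simp only [mem_mset, Finset.notMem_empty, Finset.mem_singleton]
  constructor
  · rintro ⟨-, -, h⟩; funext i; exact h i (by simp)
  · rintro rfl; exact ⟨by simp, by simp, fun _ _ => rfl⟩

lemma mset_fiber (d : κ) {s : Finset ι} {S : ι → Finset κ} {i : ι} (hi : i ∈ s)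
    {k : κ} (hk : k ∈ S i) :
    ((mset d s S).filter (fun f => f i = k)).card
      = (mset d (s.erase i) (fun j => (S j).erase k)).card := by
  apply Finset.card_bij' (fun f _ => Function.update f i d) (fun f _ => Function.update f i k)
  · intro f hf
    obtain ⟨hf', hfi⟩ := Finset.mem_filter.mp hf
    rw [Function.update_idem, ← hfi, Function.update_eq_self]
  · intro f hf
    obtain ⟨-, -, hoff⟩ := mem_mset.mp hf
    rw [Function.update_idem, ← hoff i (Finset.notMem_erase i s), Function.update_eq_self]
  · intro f hf
    obtain ⟨hf, hfi⟩ := Finset.mem_filter.mp hf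
    obtain ⟨hinj, hmem, hoff⟩ := mem_mset.mp hf
    rw [mem_mset]
    refine ⟨?_, ?_, ?_⟩
    · intro a ha b hb hab
      rw [Function.update_of_ne (Finset.ne_of_mem_erase ha),
        Function.update_of_ne (Finset.ne_of_mem_erase hb)] at hab
      exact hinj a (Finset.mem_of_mem_erase ha) b (Finset.mem_of_mem_erase hb) hab
    · intro a ha
      rw [Function.update_of_ne (Finset.ne_of_mem_erase ha)]
      refine Finset.mem_erase.mpr ⟨?_, hmem a (Finset.mem_of_mem_erase ha)⟩
      intro h
      exact Finset.ne_of_mem_erase ha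
        (hinj a (Finset.mem_of_mem_erase ha) i hi (h.trans hfi.symm))
    · intro a ha
      rcases eq_or_ne a i with rfl | hne
      · exact Function.update_self _ _ _
      · rw [Function.update_of_ne hne]
        exact hoff a (fun h => ha (Finset.mem_erase.mpr ⟨hne, h⟩))
  · intro f hf
    obtain ⟨hinj, hmem, hoff⟩ := mem_mset.mp hf
    rw [Finset.mem_filter, mem_mset]
    refine ⟨⟨?_, ?_, ?_⟩, Function.update_self _ _ _⟩
    · intro a ha b hb hab
      by_cases hna : a = i
      · by_cases hnb : b = i
        · rw [hna, hnb]
        · rw [hna, Function.update_self, Function.update_of_ne hnb] at hab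
          exact absurd hab.symm
            (Finset.ne_of_mem_erase (hmem b (Finset.mem_erase.mpr ⟨hnb, hb⟩)))
      · by_cases hnb : b = i
        · rw [hnb, Function.update_self, Function.update_of_ne hna] at hab
          exact absurd hab
            (Finset.ne_of_mem_erase (hmem a (Finset.mem_erase.mpr ⟨hna, ha⟩)))
        · rw [Function.update_of_ne hna, Function.update_of_ne hnb] at hab
          exact hinj a (Finset.mem_erase.mpr ⟨hna, ha⟩) b (Finset.mem_erase.mpr ⟨hnb, hb⟩) hab
    · intro a ha
      rcases eq_or_ne a i with rfl | hna
      · rw [Function.update_self]; exact hk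
      · rw [Function.update_of_ne hna]
        exact Finset.mem_of_mem_erase (hmem a (Finset.mem_erase.mpr ⟨hna, ha⟩))
    · intro a ha
      have hna : a ≠ i := fun h => ha (h ▸ hi)
      rw [Function.update_of_ne hna]
      exact hoff a (fun h => ha (Finset.mem_of_mem_erase h))

lemma mset_sum_fibers (d : κ) {s : Finset ι} {S : ι → Finset κ} {i : ι} (hi : i ∈ s) :
    (mset d s S).card = ∑ k ∈ S i, ((mset d s S).filter (fun f => f i = k)).card := by
  apply Finset.card_eq_sum_card_fiberwise
  intro f hf
  exact (mem_mset.mp hf).2.1 i hi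

lemma mset_prod_fibers (d : κ) {s : Finset ι} {S : ι → Finset κ} {i : ι} (hi : i ∈ s)
    (F : κ → ℝ) :
    ∏ f ∈ mset d s S, F (f i)
      = ∏ k ∈ S i, F k ^ ((mset d s S).filter (fun f => f i = k)).card := by
  rw [← Finset.prod_fiberwise_of_maps_to (g := fun f => f i) (t := S i)
    (fun f hf => (mem_mset.mp hf).2.1 i hi)]
  apply Finset.prod_congr rfl
  intro k _
  rw [← Finset.prod_const]
  apply Finset.prod_congr rfl
  intro f hf
  rw [(Finset.mem_filter.mp hf).2]

lemma mset_image (d : κ) {s : Finset ι} {c : Finset κ} {S : ι → Finset κ}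
    (hcard : s.card = c.card) (hS : ∀ i ∈ s, S i ⊆ c) {f : ι → κ} (hf : f ∈ mset d s S) :
    s.image f = c := by
  obtain ⟨hinj, hmem, -⟩ := mem_mset.mp hf
  refine Finset.eq_of_subset_of_card_le
    (Finset.image_subset_iff.mpr fun i hi => hS i hi (hmem i hi)) ?_
  rw [Finset.card_image_of_injOn (fun a ha b hb hab => hinj a ha b hb hab), ← hcard]
noncomputable def gfun (m : ℕ) : ℝ := (m.factorial : ℝ) ^ ((m : ℝ)⁻¹)

lemma one_le_gfun (m : ℕ) : 1 ≤ gfun m :=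
  Real.one_le_rpow (by exact_mod_cast m.factorial_pos) (by positivity)

lemma gfun_nonneg (m : ℕ) : 0 ≤ gfun m := zero_le_one.trans (one_le_gfun m)

lemma gfun_pow (m : ℕ) : gfun m ^ m = m.factorial := by
  rcases Nat.eq_zero_or_pos m with h | h
  · simp [h]
  · rw [gfun, ← Real.rpow_natCast ((m.factorial : ℝ) ^ ((m:ℝ)⁻¹)) m,
      ← Real.rpow_mul (by positivity),
      inv_mul_cancel₀ (by exact_mod_cast h.ne' : (m:ℝ) ≠ 0), Real.rpow_one]

lemma gfun_combine {r m : ℕ} (hr : 1 ≤ r) (hm : r ≤ m) :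
    (r : ℝ) * (gfun (r-1) ^ (r-1) * gfun r ^ (m - r)) = gfun r ^ m := by
  rw [gfun_pow (r-1), ← mul_assoc]
  have h1 : (r:ℝ) * ((r-1).factorial : ℝ) = (r.factorial : ℝ) := by
    rw [← Nat.cast_mul, Nat.mul_factorial_pred (Nat.one_le_iff_ne_zero.mp hr)]
  rw [h1, ← gfun_pow r, ← pow_add, Nat.add_sub_cancel' hm]

lemma stepD {d : κ} {s : Finset ι} {c : Finset κ} {S : ι → Finset κ}
    (hcard : s.card = c.card) (hS : ∀ i ∈ s, S i ⊆ c) {f : ι → κ} (hf : f ∈ mset d s S)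
    {j : ι} (hj : j ∈ s) :
    ∏ i ∈ s.erase j, gfun ((S j).erase (f i)).card
      = gfun ((S j).card - 1) ^ ((S j).card - 1)
          * gfun (S j).card ^ (s.card - (S j).card) := by
  obtain ⟨hinj, hmem, -⟩ := mem_mset.mp hf
  have himg : s.image f = c := mset_image d hcard hS hf
  have hfjc : f j ∈ c := himg ▸ Finset.mem_image_of_mem f hj
  have himg2 : (s.erase j).image f = c.erase (f j) := by
    refine Finset.eq_of_subset_of_card_le ?_ ?_
    · intro k hk
      obtain ⟨i, hi, rfl⟩ := Finset.mem_image.mp hk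
      refine Finset.mem_erase.mpr ⟨?_, himg ▸ Finset.mem_image_of_mem f (Finset.mem_of_mem_erase hi)⟩
      intro h
      exact Finset.ne_of_mem_erase hi (hinj i (Finset.mem_of_mem_erase hi) j hj h)
    · rw [Finset.card_image_of_injOn
        (fun a ha b hb hab => hinj a (Finset.mem_of_mem_erase ha) b (Finset.mem_of_mem_erase hb) hab),
        Finset.card_erase_of_mem hfjc, Finset.card_erase_of_mem hj, hcard]
  have hstep : ∏ i ∈ s.erase j, gfun ((S j).erase (f i)).card
      = ∏ k ∈ c.erase (f j), gfun ((S j).erase k).card := by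
    rw [← himg2, Finset.prod_image
      (fun a ha b hb hab => hinj a (Finset.mem_of_mem_erase ha) b (Finset.mem_of_mem_erase hb) hab)]
  rw [hstep]
  have hfjS : f j ∈ S j := hmem j hj
  have hsub : (S j).erase (f j) ⊆ c.erase (f j) := Finset.erase_subset_erase _ (hS j hj)
  rw [← Finset.prod_sdiff hsub]
  have h1 : ∏ k ∈ (S j).erase (f j), gfun ((S j).erase k).card
      = gfun ((S j).card - 1) ^ ((S j).card - 1) := by
    calc ∏ k ∈ (S j).erase (f j), gfun ((S j).erase k).card
        = ∏ _k ∈ (S j).erase (f j), gfun ((S j).card - 1) :=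
          Finset.prod_congr rfl (fun k hk => by
            rw [Finset.card_erase_of_mem (Finset.mem_of_mem_erase hk)])
      _ = gfun ((S j).card - 1) ^ ((S j).card - 1) := by
          rw [Finset.prod_const, Finset.card_erase_of_mem hfjS]
  have h2 : ∏ k ∈ c.erase (f j) \ (S j).erase (f j), gfun ((S j).erase k).card
      = gfun (S j).card ^ (s.card - (S j).card) := by
    have hcc : (c.erase (f j) \ (S j).erase (f j)).card = s.card - (S j).card := by
      rw [Finset.card_sdiff_of_subset hsub, Finset.card_erase_of_mem hfjc,
        Finset.card_erase_of_mem hfjS, hcard]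
      have h3 : 1 ≤ (S j).card := Finset.card_pos.mpr ⟨f j, hfjS⟩
      have h4 : (S j).card ≤ c.card := Finset.card_le_card (hS j hj)
      omega
    rw [← hcc, ← Finset.prod_const]
    apply Finset.prod_congr rfl
    intro k hk
    obtain ⟨hk1, hk2⟩ := Finset.mem_sdiff.mp hk
    have : k ∉ S j := fun h =>
      hk2 (Finset.mem_erase.mpr ⟨Finset.ne_of_mem_erase hk1, h⟩)
    rw [Finset.erase_eq_of_notMem this]
  rw [h1, h2, mul_comm]
theorem key_convex {κ : Type*} [DecidableEq κ] (c : Finset κ) (hc : c.Nonempty) (t : κ → ℕ) :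
    ((∑ k ∈ c, t k : ℕ) : ℝ) ^ (∑ k ∈ c, t k) ≤
      (c.card : ℝ) ^ (∑ k ∈ c, t k) * ∏ k ∈ c, (t k : ℝ) ^ (t k) := by
  set P : ℕ := ∑ k ∈ c, t k with hP
  rcases Nat.eq_zero_or_pos P with h0 | hpos
  · have ht : ∀ k ∈ c, t k = 0 := Finset.sum_eq_zero_iff.mp (hP ▸ h0 : (∑ k ∈ c, t k) = 0)
    rw [h0]
    rw [Finset.prod_congr rfl (fun k hk => by rw [ht k hk])]
    simp
  · have hr : (0:ℝ) < c.card := by exact_mod_cast Finset.card_pos.mpr hc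
    have hPpos : (0:ℝ) < P := by exact_mod_cast hpos
    have hfac : ∀ k ∈ c, (0:ℝ) < (t k : ℝ) ^ (t k) := by
      intro k _
      rcases Nat.eq_zero_or_pos (t k) with h | h
      · simp [h]
      · positivity
    have hprodpos : (0:ℝ) < ∏ k ∈ c, (t k : ℝ) ^ (t k) := Finset.prod_pos hfac
    have hRHSpos : (0:ℝ) < (c.card : ℝ) ^ P * ∏ k ∈ c, (t k : ℝ) ^ (t k) := by positivity
    have hLHSpos : (0:ℝ) < (P:ℝ) ^ P := by positivity
    rw [← Real.log_le_log_iff hLHSpos hRHSpos]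
    rw [Real.log_pow, Real.log_mul (by positivity) hprodpos.ne', Real.log_pow,
      Real.log_prod (fun k hk => (hfac k hk).ne')]
    have hlog : ∀ k ∈ c, Real.log ((t k : ℝ) ^ (t k)) = (t k : ℝ) * Real.log (t k) := by
      intro k _; rw [Real.log_pow]
    rw [Finset.sum_congr rfl hlog]
    have hjen := Real.convexOn_mul_log.map_centerMass_le (t := c) (w := fun _ => (1:ℝ))
      (p := fun k => (t k : ℝ)) (fun i _ => zero_le_one) (by simpa using hr)
      (fun i _ => Set.mem_Ici.mpr (by positivity))
    rw [Finset.centerMass, Finset.centerMass] at hjen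
    simp only [Finset.sum_const, nsmul_eq_mul, mul_one, one_smul, smul_eq_mul, one_mul,
      Function.comp] at hjen
    have hsum : ∑ k ∈ c, (t k : ℝ) = (P : ℝ) := by rw [hP]; push_cast; ring
    rw [hsum] at hjen
    have h2 : (P:ℝ) * Real.log ((c.card:ℝ)⁻¹ * P) ≤ ∑ k ∈ c, (t k : ℝ) * Real.log (t k) := by
      have h3 := mul_le_mul_of_nonneg_left hjen hr.le
      calc (P:ℝ) * Real.log ((c.card:ℝ)⁻¹ * P)
          = (c.card : ℝ) * ((c.card:ℝ)⁻¹ * (P:ℝ) * Real.log ((c.card:ℝ)⁻¹ * (P:ℝ))) := by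
            field_simp
        _ ≤ (c.card : ℝ) * ((c.card:ℝ)⁻¹ * ∑ k ∈ c, (t k:ℝ) * Real.log (t k)) := h3
        _ = ∑ k ∈ c, (t k : ℝ) * Real.log (t k) := by field_simp
    rw [Real.log_mul (by positivity) hPpos.ne', Real.log_inv] at h2
    nlinarith [h2]

theorem main_bound (d : κ) (m : ℕ) : ∀ (s : Finset ι) (c : Finset κ) (S : ι → Finset κ),
    s.card = m → s.card = c.card → (∀ i ∈ s, S i ⊆ c) →
    ((mset d s S).card : ℝ) ≤ ∏ i ∈ s, gfun (S i).card := by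
  induction m using Nat.strong_induction_on with
  | _ m IH =>
  intro s c S hm hcard hS
  rcases Finset.eq_empty_or_nonempty s with rfl | hsne
  · rw [mset_empty]; simp
  rcases Nat.eq_zero_or_pos (mset d s S).card with hP0 | hPpos
  · rw [hP0]
    exact_mod_cast Finset.prod_nonneg (fun i _ => gfun_nonneg _)
  -- main case
  set M := mset d s S with hM
  set P := M.card with hPdef
  obtain ⟨f₀, hf₀⟩ := Finset.card_pos.mp hPpos
  have hSne : ∀ i ∈ s, (S i).Nonempty := fun i hi => ⟨f₀ i, (mem_mset.mp hf₀).2.1 i hi⟩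
  have hfiS : ∀ f ∈ M, ∀ i ∈ s, f i ∈ S i := fun f hf i hi => (mem_mset.mp hf).2.1 i hi
  -- Step A
  have stepA : ∀ i ∈ s, ((P:ℝ))^P ≤ ((S i).card : ℝ)^P *
      ∏ f ∈ M, ((mset d (s.erase i) (fun j => (S j).erase (f i))).card : ℝ) := by
    intro i hi
    have hkey := key_convex (S i) (hSne i hi)
      (fun k => ((mset d s S).filter (fun f => f i = k)).card)
    rw [← mset_sum_fibers d hi] at hkey
    have hprod := mset_prod_fibers (S := S) d hi
      (fun k => (((mset d s S).filter (fun f => f i = k)).card : ℝ))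
    rw [← hprod] at hkey
    refine hkey.trans_eq ?_
    congr 1
    apply Finset.prod_congr rfl
    intro f hf
    rw [mset_fiber d hi (hfiS f hf i hi)]
  have hm1 : 1 ≤ m := hm ▸ Finset.card_pos.mpr hsne
  -- the big chain
  have chain : (P:ℝ) ^ (s.card * P) ≤ (∏ i ∈ s, gfun (S i).card) ^ (s.card * P) := by
    calc (P:ℝ) ^ (s.card * P)
        = ∏ _i ∈ s, (P:ℝ)^P := by rw [Finset.prod_const, ← pow_mul, Nat.mul_comm]
      _ ≤ ∏ i ∈ s, (((S i).card:ℝ)^P *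
            ∏ f ∈ M, ((mset d (s.erase i) (fun j => (S j).erase (f i))).card : ℝ)) :=
          Finset.prod_le_prod (fun i _ => pow_nonneg (Nat.cast_nonneg _) _) stepA
      _ ≤ ∏ i ∈ s, (((S i).card:ℝ)^P *
            ∏ f ∈ M, ∏ j ∈ s.erase i, gfun ((S j).erase (f i)).card) := by
          refine Finset.prod_le_prod
            (fun i _ => mul_nonneg (pow_nonneg (Nat.cast_nonneg _) _)
              (Finset.prod_nonneg fun f _ => Nat.cast_nonneg _)) (fun i hi => ?_)
          refine mul_le_mul_of_nonneg_left ?_ (pow_nonneg (Nat.cast_nonneg _) _)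
          refine Finset.prod_le_prod (fun f _ => Nat.cast_nonneg _) (fun f hf => ?_)
          have hfic : f i ∈ c := hS i hi (hfiS f hf i hi)
          refine IH (m - 1) (by omega) (s.erase i) (c.erase (f i)) _ ?_ ?_ ?_
          · rw [Finset.card_erase_of_mem hi, hm]
          · rw [Finset.card_erase_of_mem hi, Finset.card_erase_of_mem hfic, hcard]
          · intro j hj
            exact Finset.erase_subset_erase _ (hS j (Finset.mem_of_mem_erase hj))
      _ = (∏ i ∈ s, ((S i).card:ℝ))^P *
            ∏ f ∈ M, ∏ i ∈ s, ∏ j ∈ s.erase i, gfun ((S j).erase (f i)).card := by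
          rw [Finset.prod_mul_distrib, Finset.prod_pow, Finset.prod_comm]
      _ = (∏ i ∈ s, ((S i).card:ℝ))^P *
            ∏ f ∈ M, ∏ j ∈ s, ∏ i ∈ s.erase j, gfun ((S j).erase (f i)).card := by
          congr 1
          refine Finset.prod_congr rfl (fun f _ => ?_)
          exact Finset.prod_comm' (fun i j =>
            ⟨fun ⟨hi, hj⟩ => ⟨Finset.mem_erase.mpr ⟨(Finset.ne_of_mem_erase hj).symm, hi⟩,
                Finset.mem_of_mem_erase hj⟩,
             fun ⟨hi, hj⟩ => ⟨Finset.mem_of_mem_erase hi,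
                Finset.mem_erase.mpr ⟨(Finset.ne_of_mem_erase hi).symm, hj⟩⟩⟩)
      _ = (∏ i ∈ s, ((S i).card:ℝ))^P *
            ∏ f ∈ M, ∏ j ∈ s, (gfun ((S j).card - 1) ^ ((S j).card - 1)
              * gfun (S j).card ^ (s.card - (S j).card)) := by
          congr 1
          refine Finset.prod_congr rfl (fun f hf => Finset.prod_congr rfl (fun j hj => ?_))
          exact stepD hcard hS hf hj
      _ = ∏ i ∈ s, (((S i).card:ℝ) * (gfun ((S i).card - 1) ^ ((S i).card - 1)
              * gfun (S i).card ^ (s.card - (S i).card))) ^ P := by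
          rw [Finset.prod_const, ← mul_pow, ← Finset.prod_mul_distrib, Finset.prod_pow]
      _ = ∏ i ∈ s, (gfun (S i).card ^ s.card) ^ P := by
          refine Finset.prod_congr rfl (fun i hi => ?_)
          rw [gfun_combine (Finset.card_pos.mpr (hSne i hi))
            (hcard ▸ Finset.card_le_card (hS i hi))]
      _ = (∏ i ∈ s, gfun (S i).card) ^ (s.card * P) :=
          Eq.trans (Finset.prod_congr rfl (fun i _ => (pow_mul _ _ _).symm))
            (Finset.prod_pow _ _ _)
  refine le_of_pow_le_pow_left₀ ?_ (Finset.prod_nonneg (fun i _ => gfun_nonneg _)) chain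
  have hs1 : 1 ≤ s.card := Finset.card_pos.mpr hsne
  exact Nat.mul_ne_zero (by omega) (by omega)

end

/-- The permanent of an `n × n` matrix. -/
def permanent {n : ℕ} (A : Matrix (Fin n) (Fin n) ℝ) : ℝ :=
  ∑ σ : Equiv.Perm (Fin n), ∏ i : Fin n, A i (σ i)

/-- **Brégman's theorem** (Minc conjecture) for regular 0-1 matrices: if `A` is an
`n × n` 0-1 matrix with exactly `r ≥ 1` ones in every row and every column, then
`per(A)` is at most `(r!)^(n/r)`. -/
theorem bregman_permanent_upper_bound (n r : ℕ) (hr : 1 ≤ r)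
    (A : Matrix (Fin n) (Fin n) ℝ)
    (h01 : ∀ i j, A i j = 0 ∨ A i j = 1)
    (hrow : ∀ i, ∑ j, A i j = (r : ℝ))
    (hcol : ∀ j, ∑ i, A i j = (r : ℝ)) :
    permanent A ≤ (r.factorial : ℝ) ^ ((n : ℝ) / (r : ℝ)) := by
  rcases Nat.eq_zero_or_pos n with rfl | hn
  · have h1 : permanent A = 1 := by
      rw [permanent]
      simp
    rw [h1, Nat.cast_zero, zero_div, Real.rpow_zero]
  -- n ≥ 1
  set S : Fin n → Finset (Fin n) := fun i => Finset.univ.filter (fun j => A i j = 1) with hSdef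
  have hScard : ∀ i, (S i).card = r := by
    intro i
    have h1 : ∑ j, A i j = ((S i).card : ℝ) := by
      rw [← Finset.sum_filter_add_sum_filter_not Finset.univ (fun j => A i j = 1)]
      rw [Finset.sum_congr rfl (fun j hj => (Finset.mem_filter.mp hj).2),
        Finset.sum_congr rfl (fun j hj => ((h01 i j).resolve_right (Finset.mem_filter.mp hj).2 :
          A i j = 0))]
      simp [hSdef]
    have h2 : ((S i).card : ℝ) = (r : ℝ) := by rw [← h1, hrow i]
    exact_mod_cast h2
  have d : Fin n := ⟨0, hn⟩
  -- permanent = number of permutation matchings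
  have ha : permanent A
      = ((Finset.univ.filter (fun σ : Equiv.Perm (Fin n) => ∀ i, A i (σ i) = 1)).card : ℝ) := by
    rw [permanent, ← Finset.sum_boole]
    refine Finset.sum_congr rfl (fun σ _ => ?_)
    split_ifs with h
    · exact Finset.prod_eq_one (fun i _ => h i)
    · push_neg at h
      obtain ⟨i, hi⟩ := h
      exact Finset.prod_eq_zero (Finset.mem_univ i) ((h01 i (σ i)).resolve_right hi)
  have hb : (Finset.univ.filter (fun σ : Equiv.Perm (Fin n) => ∀ i, A i (σ i) = 1)).card
      = (mset d Finset.univ S).card := by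
    apply Finset.card_bij (fun (σ : Equiv.Perm (Fin n)) _ => ⇑σ)
    · intro σ hσ
      rw [mem_mset]
      refine ⟨fun a _ b _ hab => σ.injective hab, fun i _ => ?_,
        fun i hi => absurd (Finset.mem_univ i) hi⟩
      simp only [hSdef, Finset.mem_filter, Finset.mem_univ, true_and]
      exact (Finset.mem_filter.mp hσ).2 i
    · intro σ1 h1 σ2 h2 h
      exact Equiv.coe_inj.mp h
    · intro f hf
      obtain ⟨hinj, hmem, -⟩ := mem_mset.mp hf
      have hinj' : Function.Injective f :=
        fun a b hab => hinj a (Finset.mem_univ a) b (Finset.mem_univ b) hab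
      have hbij : Function.Bijective f := Finite.injective_iff_bijective.mp hinj'
      refine ⟨Equiv.ofBijective f hbij,
        Finset.mem_filter.mpr ⟨Finset.mem_univ _, fun i => ?_⟩, rfl⟩
      have h3 := hmem i (Finset.mem_univ i)
      simp only [hSdef, Finset.mem_filter] at h3
      exact h3.2
  rw [ha, hb]
  have hmain := main_bound d n Finset.univ Finset.univ S (by simp) rfl
    (fun i _ => Finset.subset_univ _)
  refine hmain.trans_eq ?_
  rw [Finset.prod_congr rfl (fun i _ => by rw [hScard i]), Finset.prod_const,
    Finset.card_univ, Fintype.card_fin, gfun, ← Real.rpow_natCast _ n,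
    ← Real.rpow_mul (by positivity)]
  congr 1
  rw [div_eq_mul_inv, mul_comm]
end

section
/- Let G be a graph on n vertices and P = (v_0, ..., v_{n-1}) a Hamilton path of G such that v_0 and v_{n-1} each have degree at least n/2 in G. Then G contains a Hamilton cycle. -/
open SimpleGraph

private lemma getVert_eq_support_getElem' {V : Type*} {G : SimpleGraph V} {u v : V}
    (p : G.Walk u v) {i : ℕ} (h : i ≤ p.length) :
    p.getVert i = p.support[i]'(by rw [SimpleGraph.Walk.length_support]; omega) := by
  induction p generalizing i with
  | nil =>
    have : i = 0 := by simpa using h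
    subst this
    simp
  | cons h' q ih =>
    cases i with
    | zero => simp
    | succ n =>
      simp only [SimpleGraph.Walk.getVert_cons_succ, SimpleGraph.Walk.support_cons,
        List.getElem_cons_succ]
      exact ih (by simpa using h)

private lemma walk_decomp' {V : Type*} {G : SimpleGraph V} :
    ∀ {u v : V} (p : G.Walk u v) (i : ℕ), i < p.length →
    ∃ (x y : V) (q : G.Walk u x) (h : G.Adj x y) (r : G.Walk y v),
      x = p.getVert i ∧ y = p.getVert (i + 1) ∧ p = q.append (SimpleGraph.Walk.cons h r) := by
  intro u v p
  induction p with
  | nil => intro i hi; simp at hi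
  | cons h' q ih =>
    intro i hi
    cases i with
    | zero => exact ⟨_, _, SimpleGraph.Walk.nil, h', q, by simp, by simp, by simp⟩
    | succ n =>
      obtain ⟨x, y, q', h, r, hx, hy, hq⟩ := ih n (by simpa using hi)
      exact ⟨x, y, SimpleGraph.Walk.cons h' q', h, r, by simpa using hx, by simpa using hy,
        by simp [hq]⟩

/-- If a graph `G` on `n ≥ 3` vertices has a Hamilton path whose two endpoints
each have degree at least `n/2`, then `G` contains a Hamilton cycle. -/
theorem hamilton_cycle_of_hamilton_path_endpoint_degrees {V : Type*}
    [Fintype V] [DecidableEq V] (G : SimpleGraph V) [DecidableRel G.Adj]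
    (hn : 3 ≤ Fintype.card V)
    (u v : V) (p : G.Walk u v) (hp : p.IsHamiltonian)
    (hu : Fintype.card V ≤ 2 * G.degree u)
    (hv : Fintype.card V ≤ 2 * G.degree v) :
    G.IsHamiltonian := by
  classical
  have hlen : p.length = Fintype.card V - 1 := hp.length_eq
  have hlen2 : 2 ≤ p.length := by omega
  have hpath : p.IsPath := hp.isPath
  have hnodup : p.support.Nodup := hpath.support_nodup
  have hinj : ∀ i j, i ≤ p.length → j ≤ p.length → p.getVert i = p.getVert j → i = j := by
    intro i j hi hj hij
    rw [getVert_eq_support_getElem' p hi, getVert_eq_support_getElem' p hj] at hij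
    exact (hnodup.getElem_inj_iff.mp hij)
  set A := (Finset.range p.length).filter (fun i => G.Adj v (p.getVert i)) with hA
  set B := (Finset.range p.length).filter (fun i => G.Adj u (p.getVert (i+1))) with hB
  have hAcard : A.card = G.degree v := by
    rw [← SimpleGraph.card_neighborFinset_eq_degree]
    apply Finset.card_bij (fun i _ => p.getVert i)
    · intro a ha
      rw [SimpleGraph.mem_neighborFinset]
      exact (Finset.mem_filter.mp ha).2
    · intro a ha b hb hab
      have ha' := Finset.mem_range.mp (Finset.mem_filter.mp ha).1
      have hb' := Finset.mem_range.mp (Finset.mem_filter.mp hb).1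
      exact hinj a b (by omega) (by omega) hab
    · intro b hb
      rw [SimpleGraph.mem_neighborFinset] at hb
      have hbs : b ∈ p.support := hp.mem_support b
      obtain ⟨m, hm, hmle⟩ := SimpleGraph.Walk.mem_support_iff_exists_getVert.mp hbs
      have hmne : m ≠ p.length := by
        intro h
        subst h
        rw [SimpleGraph.Walk.getVert_length] at hm
        exact (G.ne_of_adj hb) hm
      exact ⟨m, Finset.mem_filter.mpr ⟨Finset.mem_range.mpr (by omega), hm ▸ hb⟩, hm⟩
  have hBcard : B.card = G.degree u := by
    rw [← SimpleGraph.card_neighborFinset_eq_degree]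
    apply Finset.card_bij (fun i _ => p.getVert (i+1))
    · intro a ha
      rw [SimpleGraph.mem_neighborFinset]
      exact (Finset.mem_filter.mp ha).2
    · intro a ha b hb hab
      have ha' := Finset.mem_range.mp (Finset.mem_filter.mp ha).1
      have hb' := Finset.mem_range.mp (Finset.mem_filter.mp hb).1
      have := hinj (a+1) (b+1) (by omega) (by omega) hab
      omega
    · intro b hb
      rw [SimpleGraph.mem_neighborFinset] at hb
      have hbs : b ∈ p.support := hp.mem_support b
      obtain ⟨m, hm, hmle⟩ := SimpleGraph.Walk.mem_support_iff_exists_getVert.mp hbs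
      have hmne : m ≠ 0 := by
        intro h
        subst h
        rw [SimpleGraph.Walk.getVert_zero] at hm
        exact (G.ne_of_adj hb) hm
      obtain ⟨k, rfl⟩ := Nat.exists_eq_succ_of_ne_zero hmne
      exact ⟨k, Finset.mem_filter.mpr ⟨Finset.mem_range.mpr (by omega), hm ▸ hb⟩, hm⟩
  have hABsub : A ∪ B ⊆ Finset.range p.length := by
    intro x hx
    rcases Finset.mem_union.mp hx with h | h
    · exact (Finset.mem_filter.mp h).1
    · exact (Finset.mem_filter.mp h).1
  have hinter : (A ∩ B).Nonempty := by
    rw [Finset.nonempty_iff_ne_empty]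
    intro hcon
    have h1 : A.card + B.card = (A ∪ B).card + (A ∩ B).card := (Finset.card_union_add_card_inter A B).symm
    have h2 : (A ∪ B).card ≤ p.length := by
      simpa using Finset.card_le_card hABsub
    rw [hcon] at h1
    simp at h1
    omega
  obtain ⟨i, hi⟩ := hinter
  obtain ⟨hiA, hiB⟩ := Finset.mem_inter.mp hi
  have hilt : i < p.length := Finset.mem_range.mp (Finset.mem_filter.mp hiA).1
  obtain ⟨x, y, q, hxy, r, hxe, hye, hpq⟩ := walk_decomp' p i hilt
  have hadj_vx : G.Adj v x := hxe ▸ (Finset.mem_filter.mp hiA).2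
  have hadj_uy : G.Adj u y := hye ▸ (Finset.mem_filter.mp hiB).2
  set d : G.Walk y u := r.append (SimpleGraph.Walk.cons hadj_vx q.reverse) with hd
  set c : G.Walk u u := SimpleGraph.Walk.cons hadj_uy d with hc
  have hsupp : p.support = q.support ++ r.support := by
    rw [hpq]
    simp [SimpleGraph.Walk.support_append]
  have hd_supp : d.support = r.support ++ q.support.reverse := by
    simp [hd, SimpleGraph.Walk.support_append, SimpleGraph.Walk.support_reverse]
  have hperm : d.support.Perm p.support := by
    rw [hsupp, hd_supp]
    exact (List.perm_append_comm).trans ((q.support.reverse_perm).append_right _)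
  have hd_nodup : d.support.Nodup := hperm.nodup_iff.mpr hnodup
  have hdisj : q.support.Disjoint r.support := by
    rw [hsupp] at hnodup
    exact List.disjoint_of_nodup_append hnodup
  have hd_path : d.IsPath := SimpleGraph.Walk.IsPath.mk' hd_nodup
  have hedge : s(u, y) ∉ d.edges := by
    rw [hd]
    simp only [SimpleGraph.Walk.edges_append, SimpleGraph.Walk.edges_cons,
      SimpleGraph.Walk.edges_reverse, List.mem_append, List.mem_cons, List.mem_reverse]
    push_neg
    refine ⟨?_, ?_, ?_⟩
    · intro hmem
      have : u ∈ r.support := SimpleGraph.Walk.fst_mem_support_of_mem_edges r hmem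
      exact hdisj (q.start_mem_support) this
    · intro heq
      rw [Sym2.eq_iff] at heq
      rcases heq with ⟨h1, h2⟩ | ⟨h1, h2⟩
      · have : (0 : ℕ) = p.length := hinj 0 p.length (by omega) le_rfl
          (by rw [SimpleGraph.Walk.getVert_zero, SimpleGraph.Walk.getVert_length]; exact h1)
        omega
      · have e1 : (0 : ℕ) = i := hinj 0 i (by omega) (by omega)
          (by rw [SimpleGraph.Walk.getVert_zero, ← hxe]; exact h1)
        have e2 : i + 1 = p.length := hinj (i+1) p.length (by omega) le_rfl
          (by rw [SimpleGraph.Walk.getVert_length, ← hye]; exact h2)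
        omega
    · intro hmem
      have : y ∈ q.support := SimpleGraph.Walk.snd_mem_support_of_mem_edges q hmem
      exact hdisj this (r.start_mem_support)
  have hcycle : c.IsCycle := by
    rw [hc, SimpleGraph.Walk.cons_isCycle_iff]
    exact ⟨hd_path, hedge⟩
  have hham : c.IsHamiltonianCycle := by
    rw [SimpleGraph.Walk.isHamiltonianCycle_iff_isCycle_and_support_count_tail_eq_one]
    refine ⟨hcycle, fun a => ?_⟩
    have hct : c.support.tail = d.support := by
      rw [hc, SimpleGraph.Walk.support_cons, List.tail_cons]
    rw [hct, hperm.count_eq]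
    exact hp a
  exact fun _ => ⟨u, c, hham⟩
end
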